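/- Let H be a fixed n×n Hermitian matrix over ℂ, for T > 0 let ρ_T = exp(-H/T)/Tr[exp(-H/T)] be the Gibbs state, let F(T) be the quantum Fisher information of the family T ↦ ρ_T at T (thermometry QFI), and let S(T) be the von Neumann entropy of ρ_T. Then the exact identity ∂_T(T·F(T)) = ∂_T² S(T) holds for every T > 0. -/

import Mathlib

open scoped Classical

open Matrix Filter Asymptotics ComplexOrder

/-- Positive-semidefinite matrix square root (0 if not PSD). -/
noncomputable def msqrt {m : Type*} [Fintype m] [DecidableEq m] (A : Matrix m m ℂ) :
    Matrix m m ℂ :=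
  if h : A.PosSemidef then
    (h.1.eigenvectorUnitary : Matrix m m ℂ) *
      diagonal (((↑) : ℝ → ℂ) ∘ Real.sqrt ∘ h.1.eigenvalues) *
      (star (h.1.eigenvectorUnitary : Matrix m m ℂ)) else 0

/-- Fidelity between density matrices. -/
noncomputable def Fid {m : Type*} [Fintype m] [DecidableEq m] (ρ σ : Matrix m m ℂ) : ℝ :=
  ((msqrt (msqrt ρ * σ * msqrt ρ)).trace).re ^ 2

/-- Quantum Fisher information of a family of states at a point. -/
noncomputable def QFI {m : Type*} [Fintype m] [DecidableEq m] (ρ : ℝ → Matrix m m ℂ) (ξ : ℝ) : ℝ :=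
  -2 * iteratedDeriv 2 (fun ε => Fid (ρ ξ) (ρ (ξ + ε))) 0

/-- Gibbs state exp((-1/T) H)/Z. -/
noncomputable def gibbs {m : Type*} [Fintype m] [DecidableEq m] (H : Matrix m m ℂ) (T : ℝ) :
    Matrix m m ℂ :=
  ((NormedSpace.exp ((-(T : ℂ)⁻¹) • H)).trace)⁻¹ • NormedSpace.exp ((-(T : ℂ)⁻¹) • H)

/-- Von Neumann entropy. -/
noncomputable def vnEntropy {m : Type*} [Fintype m] [DecidableEq m] (ρ : Matrix m m ℂ) : ℝ :=
  if h : ρ.IsHermitian then -∑ i, h.eigenvalues i * Real.log (h.eigenvalues i) else 0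

namespace Stmt1Aux

/-! ### Analytic toolkit -/

variable {n : ℕ}

noncomputable def Zf (a : Fin n → ℝ) (T : ℝ) : ℝ := ∑ i, Real.exp (-a i / T)
noncomputable def Af (a : Fin n → ℝ) (T : ℝ) : ℝ := ∑ i, a i * Real.exp (-a i / T)
noncomputable def Bf (a : Fin n → ℝ) (T : ℝ) : ℝ := ∑ i, a i ^ 2 * Real.exp (-a i / T)

lemma Zf_pos (a : Fin n → ℝ) (hn : 0 < n) (T : ℝ) : 0 < Zf a T := by
  have : Nonempty (Fin n) := ⟨⟨0, hn⟩⟩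
  exact Finset.sum_pos (fun i _ => Real.exp_pos _) Finset.univ_nonempty

lemma hasDerivAt_exp_neg_div (c : ℝ) {T : ℝ} (hT : T ≠ 0) :
    HasDerivAt (fun u : ℝ => Real.exp (-c / u)) (Real.exp (-c / T) * (c / T ^ 2)) T := by
  have h1 : HasDerivAt (fun u : ℝ => -c / u) (c / T ^ 2) T := by
    have h := (hasDerivAt_inv hT).const_mul (-c)
    have heq : (fun u : ℝ => -c / u) = fun u : ℝ => -c * u⁻¹ := by
      funext u; rw [div_eq_mul_inv]
    rw [heq]
    refine h.congr_deriv ?_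
    ring
  exact (Real.hasDerivAt_exp _).comp T h1

variable (a : Fin n → ℝ) (T : ℝ)

noncomputable def Wf (u : ℝ) : ℝ := ∑ i, Real.exp (-(a i / 2) / T) * Real.exp (-(a i / 2) / u)
noncomputable def Wd (u : ℝ) : ℝ :=
  ∑ i, Real.exp (-(a i / 2) / T) * (Real.exp (-(a i / 2) / u) * (a i / 2 / u ^ 2))
noncomputable def Wdd (u : ℝ) : ℝ :=
  ∑ i, Real.exp (-(a i / 2) / T) *
    (Real.exp (-(a i / 2) / u) * (a i / 2 / u ^ 2) * (a i / 2 / u ^ 2)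
      + Real.exp (-(a i / 2) / u) * (-(a i) / u ^ 3))

lemma hasDerivAt_Wf {u : ℝ} (hu : u ≠ 0) : HasDerivAt (Wf a T) (Wd a T u) u :=
  HasDerivAt.fun_sum fun i _ => (hasDerivAt_exp_neg_div (a i / 2) hu).const_mul _

lemma hasDerivAt_Wd {u : ℝ} (hu : u ≠ 0) : HasDerivAt (Wd a T) (Wdd a T u) u := by
  refine HasDerivAt.fun_sum fun i _ => HasDerivAt.const_mul _ ?_
  have h1 := hasDerivAt_exp_neg_div (a i / 2) hu
  have h2 : HasDerivAt (fun u : ℝ => a i / 2 / u ^ 2) (-(a i) / u ^ 3) u := by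
    have hp : HasDerivAt (fun u : ℝ => u ^ 2) (2 * u) u := by
      simpa using hasDerivAt_pow 2 u
    have := (hp.inv (pow_ne_zero 2 hu)).const_mul (a i / 2)
    have heq : (fun u : ℝ => a i / 2 / u ^ 2) = fun u : ℝ => a i / 2 * (u ^ 2)⁻¹ := by
      funext u; rw [div_eq_mul_inv]
    rw [heq]
    refine this.congr_deriv ?_
    field_simp
  have := h1.mul h2
  exact this

lemma hasDerivAt_Zf {T : ℝ} (hT : T ≠ 0) :
    HasDerivAt (Zf a) (Af a T / T ^ 2) T := by
  have : HasDerivAt (Zf a) (∑ i, Real.exp (-a i / T) * (a i / T ^ 2)) T :=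
    HasDerivAt.fun_sum fun i _ => hasDerivAt_exp_neg_div (a i) hT
  convert this using 1
  rw [Af, Finset.sum_div]
  exact Finset.sum_congr rfl fun i _ => by ring

lemma hasDerivAt_Af {T : ℝ} (hT : T ≠ 0) :
    HasDerivAt (Af a) (Bf a T / T ^ 2) T := by
  have : HasDerivAt (Af a) (∑ i, a i * (Real.exp (-a i / T) * (a i / T ^ 2))) T :=
    HasDerivAt.fun_sum fun i _ => (hasDerivAt_exp_neg_div (a i) hT).const_mul (a i)
  convert this using 1
  rw [Bf, Finset.sum_div]
  exact Finset.sum_congr rfl fun i _ => by ring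

noncomputable def Zd (u : ℝ) : ℝ := Af a u / u ^ 2
noncomputable def Zdd (u : ℝ) : ℝ := Bf a u / u ^ 4 - 2 * Af a u / u ^ 3

lemma hasDerivAt_Zd {u : ℝ} (hu : u ≠ 0) : HasDerivAt (Zd a) (Zdd a u) u := by
  have hp : HasDerivAt (fun u : ℝ => u ^ 2) (2 * u) u := by simpa using hasDerivAt_pow 2 u
  have := (hasDerivAt_Af a hu).div hp (pow_ne_zero 2 hu)
  have heq : Zd a = fun u => Af a u / u ^ 2 := rfl
  rw [heq]
  refine this.congr_deriv ?_
  rw [Zdd]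
  field_simp

lemma Wf_eval : Wf a T T = Zf a T := by
  refine Finset.sum_congr rfl fun i _ => ?_
  rw [← Real.exp_add]
  congr 1
  ring

lemma Wd_eval : Wd a T T = Af a T / (2 * T ^ 2) := by
  rw [Wd, Af, Finset.sum_div]
  refine Finset.sum_congr rfl fun i _ => ?_
  rw [← mul_assoc, ← Real.exp_add]
  rw [show -(a i / 2) / T + -(a i / 2) / T = -a i / T by ring]
  ring

lemma Wdd_eval : Wdd a T T = Bf a T / (4 * T ^ 4) - Af a T / T ^ 3 := by
  rw [Wdd, Bf, Af, Finset.sum_div, Finset.sum_div, ← Finset.sum_sub_distrib]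
  refine Finset.sum_congr rfl fun i _ => ?_
  rw [mul_add, ← mul_assoc, ← mul_assoc, ← Real.exp_add, ← mul_assoc, ← Real.exp_add]
  rw [show -(a i / 2) / T + -(a i / 2) / T = -a i / T by ring]
  ring

noncomputable def hfun (u : ℝ) : ℝ := Wf a T u ^ 2 / (Zf a T * Zf a u)

noncomputable def hd (u : ℝ) : ℝ :=
  (2 * Wf a T u * Wd a T u * (Zf a T * Zf a u) - Wf a T u ^ 2 * (Zf a T * Zd a u)) /
    (Zf a T * Zf a u) ^ 2

lemma hasDerivAt_hfun (hn : 0 < n) {u : ℝ} (hu : u ≠ 0) :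
    HasDerivAt (hfun a T) (hd a T u) u := by
  have hZu := Zf_pos a hn u
  have hZT := Zf_pos a hn T
  have h1 : HasDerivAt (fun u => Wf a T u ^ 2) (2 * Wf a T u * Wd a T u) u := by
    have := (hasDerivAt_Wf a T hu).pow 2
    exact this.congr_deriv (by ring)
  have h2 : HasDerivAt (fun u => Zf a T * Zf a u) (Zf a T * Zd a u) u :=
    (hasDerivAt_Zf a hu).const_mul _
  exact h1.div h2 (by positivity)

lemma hasDerivAt_hd (hn : 0 < n) (hT : 0 < T) :
    HasDerivAt (hd a T)
      (Af a T ^ 2 / (2 * T ^ 4 * Zf a T ^ 2) - Bf a T / (2 * T ^ 4 * Zf a T)) T := by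
  have hT0 : T ≠ 0 := ne_of_gt hT
  have hZT := Zf_pos a hn T
  have hW := hasDerivAt_Wf a T hT0
  have hWd := hasDerivAt_Wd a T hT0
  have hZ := hasDerivAt_Zf a hT0
  have hZd := hasDerivAt_Zd a hT0
  have hKZ : HasDerivAt (fun u => Zf a T * Zf a u) (Zf a T * Zd a T) T := hZ.const_mul _
  have hP : HasDerivAt
      (fun u => 2 * Wf a T u * Wd a T u * (Zf a T * Zf a u) - Wf a T u ^ 2 * (Zf a T * Zd a u))
      ((2 * Wd a T T * Wd a T T + 2 * Wf a T T * Wdd a T T) * (Zf a T * Zf a T)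
        + 2 * Wf a T T * Wd a T T * (Zf a T * Zd a T)
        - (2 * Wf a T T * Wd a T T * (Zf a T * Zd a T)
            + Wf a T T ^ 2 * (Zf a T * Zdd a T))) T := by
    have t1 : HasDerivAt (fun u => 2 * Wf a T u * Wd a T u)
        (2 * Wd a T T * Wd a T T + 2 * Wf a T T * Wdd a T T) T := by
      have := (hW.const_mul 2).mul hWd
      exact this
    have t2 : HasDerivAt (fun u => Wf a T u ^ 2 * (Zf a T * Zd a u))
        (2 * Wf a T T * Wd a T T * (Zf a T * Zd a T)
          + Wf a T T ^ 2 * (Zf a T * Zdd a T)) T := by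
      have hp : HasDerivAt (fun u => Wf a T u ^ 2) (2 * Wf a T T * Wd a T T) T := by
        have := hW.pow 2; exact this.congr_deriv (by ring)
      have := hp.mul (hZd.const_mul (Zf a T))
      exact this
    have := (t1.mul hKZ).sub t2
    exact this
  have hQ : HasDerivAt (fun u => (Zf a T * Zf a u) ^ 2)
      (2 * (Zf a T * Zf a T) * (Zf a T * Zd a T)) T := by
    have := hKZ.pow 2; exact this.congr_deriv (by ring)
  have hdiv := hP.div hQ (by positivity)
  have heq : hd a T = fun u =>
      (2 * Wf a T u * Wd a T u * (Zf a T * Zf a u) - Wf a T u ^ 2 * (Zf a T * Zd a u)) /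
        (Zf a T * Zf a u) ^ 2 := rfl
  rw [heq]
  refine hdiv.congr_deriv ?_
  rw [Wf_eval, Wd_eval, Wdd_eval, Zd, Zdd]
  field_simp
  ring

/-- The explicit entropy function. -/
noncomputable def SS (T : ℝ) : ℝ := Af a T / (T * Zf a T) + Real.log (Zf a T)

lemma hasDerivAt_SS (hn : 0 < n) {T : ℝ} (hT : 0 < T) :
    HasDerivAt (SS a) ((Bf a T * Zf a T - Af a T ^ 2) / (T ^ 3 * Zf a T ^ 2)) T := by
  have hZ := Zf_pos a hn T
  have hT0 : T ≠ 0 := ne_of_gt hT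
  have h1 : HasDerivAt (fun u => Af a u / (u * Zf a u))
      ((Bf a T / T ^ 2 * (T * Zf a T) - Af a T * (1 * Zf a T + T * (Af a T / T ^ 2)))
        / (T * Zf a T) ^ 2) T :=
    (hasDerivAt_Af a hT0).div ((hasDerivAt_id T).mul (hasDerivAt_Zf a hT0))
      (by positivity)
  have h2 : HasDerivAt (fun u => Real.log (Zf a u)) (Af a T / T ^ 2 / Zf a T) T :=
    (hasDerivAt_Zf a hT0).log (ne_of_gt hZ)
  have heq : SS a = fun u => Af a u / (u * Zf a u) + Real.log (Zf a u) := rfl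
  rw [heq]
  refine (h1.add h2).congr_deriv ?_
  field_simp
  ring


section generic
variable {U : Matrix (Fin n) (Fin n) ℂ}

lemma trace_conj (hU1 : star U * U = 1) (D : Matrix (Fin n) (Fin n) ℂ) :
    (U * D * star U).trace = D.trace := by
  rw [trace_mul_cycle, hU1, one_mul]

open scoped MatrixOrder in
lemma msqrt_conj_diag (hU1 : star U * U = 1) (w : Fin n → ℝ) (hw : ∀ i, 0 ≤ w i) :
    msqrt (U * diagonal (fun i => (w i : ℂ)) * star U)
      = U * diagonal (fun i => (Real.sqrt (w i) : ℂ)) * star U := by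
  have hcancel : ∀ X : Matrix (Fin n) (Fin n) ℂ, star U * (U * X) = X := fun X => by
    rw [← mul_assoc, hU1, one_mul]
  set B := U * diagonal (fun i => (Real.sqrt (w i) : ℂ)) * star U with hBdef
  have hBpsd : B.PosSemidef := by
    have hd : (diagonal (fun i => (Real.sqrt (w i) : ℂ))).PosSemidef :=
      posSemidef_diagonal_iff.mpr fun i => Complex.zero_le_real.mpr (Real.sqrt_nonneg _)
    have := hd.mul_mul_conjTranspose_same U
    rwa [← Matrix.star_eq_conjTranspose] at this
  have hB2 : B ^ 2 = U * diagonal (fun i => (w i : ℂ)) * star U := by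
    rw [pow_two, hBdef]
    simp only [mul_assoc]
    rw [hcancel]
    rw [← mul_assoc (diagonal _), diagonal_mul_diagonal]
    have : (fun i => (Real.sqrt (w i) : ℂ) * (Real.sqrt (w i) : ℂ)) = fun i => ((w i : ℂ)) := by
      funext i
      rw [← Complex.ofReal_mul, Real.mul_self_sqrt (hw i)]
    rw [this, ← mul_assoc]
  have hApsd : (U * diagonal (fun i => (w i : ℂ)) * star U).PosSemidef := hB2 ▸ hBpsd.pow 2
  rw [msqrt, dif_pos hApsd]
  have key : CFC.sqrt (U * diagonal (fun i => (w i : ℂ)) * star U) = B :=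
    CFC.sqrt_unique (by rw [← pow_two]; exact hB2) hBpsd.nonneg
  rw [CFC.sqrt_eq_real_sqrt _ hApsd.nonneg, cfcₙ_eq_cfc, hApsd.1.cfc_eq] at key
  exact key

lemma eig_sum (hU1 : star U * U = 1) (hU2 : U * star U = 1) (f : ℝ → ℝ) (d : Fin n → ℝ)
    (hA : (U * diagonal (fun i => (d i : ℂ)) * star U).IsHermitian) :
    ∑ i, f (hA.eigenvalues i) = ∑ i, f (d i) := by
  set A := U * diagonal (fun i => (d i : ℂ)) * star U with hAdef
  set e := hA.eigenvalues with he
  set V := (hA.eigenvectorUnitary : Matrix (Fin n) (Fin n) ℂ) with hV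
  have hV1 : star V * V = 1 := by
    simpa [hV] using (Matrix.mem_unitaryGroup_iff').mp hA.eigenvectorUnitary.2
  have hV2 : V * star V = 1 := by
    simpa [hV] using (Matrix.mem_unitaryGroup_iff).mp hA.eigenvectorUnitary.2
  have hdet : ∀ t : ℂ, ∏ i, (t - (d i : ℂ)) = ∏ i, (t - (e i : ℂ)) := by
    intro t
    have key : ∀ (W : Matrix (Fin n) (Fin n) ℂ), W * star W = 1 → star W * W = 1 →
        ∀ (c : Fin n → ℂ), det (t • (1 : Matrix (Fin n) (Fin n) ℂ) - W * diagonal c * star W)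
          = ∏ i, (t - c i) := by
      intro W hW2 hW1 c
      have h1 : t • (1 : Matrix (Fin n) (Fin n) ℂ) - W * diagonal c * star W
          = W * diagonal (fun i => t - c i) * star W := by
        have : t • (1 : Matrix (Fin n) (Fin n) ℂ) = W * diagonal (fun _ => t) * star W := by
          rw [← smul_one_eq_diagonal, Matrix.mul_smul, Matrix.smul_mul, mul_one, hW2]
        rw [this, ← Matrix.sub_mul, ← Matrix.mul_sub, diagonal_sub]
      rw [h1, det_mul, det_mul, mul_comm, ← mul_assoc, ← det_mul, hW1, det_one, one_mul,
        det_diagonal]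
    have h2 : A = V * diagonal (fun i => (e i : ℂ)) * star V := by
      have := hA.spectral_theorem
      simpa [Function.comp_def, Unitary.conjStarAlgAut_apply, hV, he] using this
    rw [← key U hU2 hU1 fun i => (d i : ℂ), ← hAdef, h2, key V hV2 hV1]
  have hpoly : (Finset.univ.val.map fun i => ((d i : ℂ)))
      = Finset.univ.val.map fun i => ((e i : ℂ)) := by
    have hP : ((Finset.univ.val.map fun i => ((d i : ℂ))).map
          fun c => Polynomial.X - Polynomial.C c).prod
        = ((Finset.univ.val.map fun i => ((e i : ℂ))).map
          fun c => Polynomial.X - Polynomial.C c).prod := by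
      apply Polynomial.funext
      intro t
      have evalp : ∀ (c : Fin n → ℝ),
          Polynomial.eval t ((Finset.univ.val.map fun i => ((c i : ℂ))).map
            fun c => Polynomial.X - Polynomial.C c).prod = ∏ i, (t - (c i : ℂ)) := by
        intro c
        rw [Polynomial.eval_multiset_prod, Multiset.map_map]
        simp only [Finset.prod, Multiset.map_map]
        congr 1
        exact Multiset.map_congr rfl fun i _ => by simp
      rw [evalp, evalp]
      exact hdet t
    have := congrArg Polynomial.roots hP
    rwa [Polynomial.roots_multiset_prod_X_sub_C, Polynomial.roots_multiset_prod_X_sub_C] at this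
  have hreal : Finset.univ.val.map d = Finset.univ.val.map e := by
    apply Multiset.map_injective Complex.ofReal_injective
    rw [Multiset.map_map, Multiset.map_map]
    exact hpoly
  calc ∑ i, f (e i) = ((Finset.univ.val.map e).map f).sum := by
        rw [Multiset.map_map]; rfl
    _ = ((Finset.univ.val.map d).map f).sum := by rw [hreal]
    _ = ∑ i, f (d i) := by rw [Multiset.map_map]; rfl



end generic

section gibbslemmas

variable {n : ℕ} (H : Matrix (Fin n) (Fin n) ℂ) (hherm : H.IsHermitian)

lemma exp_eq (T : ℝ) :
    NormedSpace.exp ((-(T : ℂ)⁻¹) • H)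
      = (hherm.eigenvectorUnitary : Matrix (Fin n) (Fin n) ℂ) *
          diagonal (fun i => ((Real.exp (-hherm.eigenvalues i / T) : ℝ) : ℂ)) *
          star (hherm.eigenvectorUnitary : Matrix (Fin n) (Fin n) ℂ) := by
  set U := (hherm.eigenvectorUnitary : Matrix (Fin n) (Fin n) ℂ) with hU
  have hU2 : U * star U = 1 := by
    simpa [hU] using (Matrix.mem_unitaryGroup_iff).mp hherm.eigenvectorUnitary.2
  have hUinv : U⁻¹ = star U := inv_eq_right_inv hU2
  have hU1 : star U * U = 1 := by
    simpa [hU] using (Matrix.mem_unitaryGroup_iff').mp hherm.eigenvectorUnitary.2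
  have hUunit : IsUnit U := ⟨⟨U, star U, hU2, hU1⟩, rfl⟩
  conv_lhs => rw [hherm.spectral_theorem, Unitary.conjStarAlgAut_apply]
  have hsmul : (-(T : ℂ)⁻¹) • (U * diagonal (RCLike.ofReal ∘ hherm.eigenvalues) * star U)
      = U * ((-(T : ℂ)⁻¹) • diagonal (RCLike.ofReal ∘ hherm.eigenvalues)) * star U := by
    simp [Matrix.smul_mul, Matrix.mul_smul]
  rw [hsmul, ← hUinv, Matrix.exp_conj U _ hUunit, hUinv]
  rw [← diagonal_smul, Matrix.exp_diagonal, Pi.exp_def]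
  have hfun : (fun i => NormedSpace.exp
        (((-(T : ℂ)⁻¹) • (RCLike.ofReal ∘ hherm.eigenvalues)) i))
      = fun i => ((Real.exp (-hherm.eigenvalues i / T) : ℝ) : ℂ) := by
    funext i
    rw [← Complex.exp_eq_exp_ℂ, Complex.ofReal_exp]
    congr 1
    simp only [Pi.smul_apply, Function.comp_apply, smul_eq_mul]
    show -(T : ℂ)⁻¹ * ((hherm.eigenvalues i : ℝ) : ℂ) = ((-hherm.eigenvalues i / T : ℝ) : ℂ)
    push_cast
    ring
  rw [hfun]

lemma trace_exp_eq (T : ℝ) :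
    (NormedSpace.exp ((-(T : ℂ)⁻¹) • H)).trace = ((Zf hherm.eigenvalues T : ℝ) : ℂ) := by
  set U := (hherm.eigenvectorUnitary : Matrix (Fin n) (Fin n) ℂ) with hU
  have hU1 : star U * U = 1 := by
    simpa [hU] using (Matrix.mem_unitaryGroup_iff').mp hherm.eigenvectorUnitary.2
  rw [exp_eq H hherm T, trace_conj hU1, trace_diagonal, Zf, Complex.ofReal_sum]

lemma gibbs_eq' (T : ℝ) :
    ((NormedSpace.exp ((-(T : ℂ)⁻¹) • H)).trace)⁻¹ • NormedSpace.exp ((-(T : ℂ)⁻¹) • H)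
      = (hherm.eigenvectorUnitary : Matrix (Fin n) (Fin n) ℂ) *
          diagonal (fun i =>
            ((Real.exp (-hherm.eigenvalues i / T) / Zf hherm.eigenvalues T : ℝ) : ℂ)) *
          star (hherm.eigenvectorUnitary : Matrix (Fin n) (Fin n) ℂ) := by
  rw [trace_exp_eq H hherm T, exp_eq H hherm T]
  set U := (hherm.eigenvectorUnitary : Matrix (Fin n) (Fin n) ℂ)
  have hsmul : ∀ (c : ℂ) (v : Fin n → ℂ), c • (U * diagonal v * star U)
      = U * diagonal (fun i => c * v i) * star U := by
    intro c v
    rw [← Matrix.smul_mul, ← Matrix.mul_smul, ← diagonal_smul]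
    rfl
  have hfun : (fun i => ((Zf hherm.eigenvalues T : ℝ) : ℂ)⁻¹ *
      ((Real.exp (-hherm.eigenvalues i / T) : ℝ) : ℂ))
      = fun i => ((Real.exp (-hherm.eigenvalues i / T) / Zf hherm.eigenvalues T : ℝ) : ℂ) := by
    funext i
    push_cast
    ring
  rw [hsmul, hfun]

lemma conj_diag_isHermitian (w : Fin n → ℝ) :
    ((hherm.eigenvectorUnitary : Matrix (Fin n) (Fin n) ℂ) *
        diagonal (fun i => ((w i : ℝ) : ℂ)) *
        star (hherm.eigenvectorUnitary : Matrix (Fin n) (Fin n) ℂ)).IsHermitian := by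
  set U := (hherm.eigenvectorUnitary : Matrix (Fin n) (Fin n) ℂ)
  have hd : (diagonal (fun i => ((w i : ℝ) : ℂ))).IsHermitian :=
    isHermitian_diagonal_iff.mpr fun i => Complex.conj_ofReal _
  have := Matrix.isHermitian_mul_mul_conjTranspose U hd
  rwa [← Matrix.star_eq_conjTranspose] at this

end gibbslemmas


section main

variable {n : ℕ} (H : Matrix (Fin n) (Fin n) ℂ) (hherm : H.IsHermitian)

/-- Fidelity between two Gibbs states, explicitly. -/
lemma Fid_gibbs (hn : 0 < n) {T u : ℝ} (hT : 0 < T) (hu : 0 < u) :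
    Fid (gibbs H T) (gibbs H u)
      = Wf hherm.eigenvalues T u ^ 2 / (Zf hherm.eigenvalues T * Zf hherm.eigenvalues u) := by
  set a := hherm.eigenvalues with ha
  set U := (hherm.eigenvectorUnitary : Matrix (Fin n) (Fin n) ℂ) with hUdef
  have hU1 : star U * U = 1 := by
    simpa [hUdef] using (Matrix.mem_unitaryGroup_iff').mp hherm.eigenvectorUnitary.2
  have hcancel : ∀ X : Matrix (Fin n) (Fin n) ℂ, star U * (U * X) = X := fun X => by
    rw [← mul_assoc, hU1, one_mul]
  have hZT := Zf_pos a hn T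
  have hZu := Zf_pos a hn u
  set p : Fin n → ℝ := fun i => Real.exp (-a i / T) / Zf a T with hp
  set q : Fin n → ℝ := fun i => Real.exp (-a i / u) / Zf a u with hq
  have hp0 : ∀ i, 0 ≤ p i := fun i => div_nonneg (Real.exp_pos _).le hZT.le
  have hq0 : ∀ i, 0 ≤ q i := fun i => div_nonneg (Real.exp_pos _).le hZu.le
  have hgT : gibbs H T = U * diagonal (fun i => ((p i : ℝ) : ℂ)) * star U := gibbs_eq' H hherm T
  have hgu : gibbs H u = U * diagonal (fun i => ((q i : ℝ) : ℂ)) * star U := gibbs_eq' H hherm u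
  rw [Fid, hgT, hgu, msqrt_conj_diag hU1 p hp0]
  have hprod : U * diagonal (fun i => (Real.sqrt (p i) : ℂ)) * star U *
      (U * diagonal (fun i => ((q i : ℝ) : ℂ)) * star U) *
      (U * diagonal (fun i => (Real.sqrt (p i) : ℂ)) * star U)
      = U * diagonal (fun i => ((p i * q i : ℝ) : ℂ)) * star U := by
    simp only [mul_assoc]
    rw [hcancel, hcancel]
    rw [← mul_assoc (diagonal _), diagonal_mul_diagonal, ← mul_assoc (diagonal _),
      diagonal_mul_diagonal]
    have : (fun i => (Real.sqrt (p i) : ℂ) * ((q i : ℝ) : ℂ) * (Real.sqrt (p i) : ℂ))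
        = fun i => ((p i * q i : ℝ) : ℂ) := by
      funext i
      rw [show (Real.sqrt (p i) : ℂ) * ((q i : ℝ) : ℂ) * (Real.sqrt (p i) : ℂ)
        = ((Real.sqrt (p i) : ℂ) * (Real.sqrt (p i) : ℂ)) * ((q i : ℝ) : ℂ) by ring]
      rw [← Complex.ofReal_mul, Real.mul_self_sqrt (hp0 i), ← Complex.ofReal_mul]
    rw [this]
  rw [hprod, msqrt_conj_diag hU1 _ (fun i => mul_nonneg (hp0 i) (hq0 i)), trace_conj hU1,
    trace_diagonal]
  have hre : (∑ i, (Real.sqrt (p i * q i) : ℂ)).re = ∑ i, Real.sqrt (p i * q i) := by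
    rw [← Complex.ofReal_sum, Complex.ofReal_re]
  rw [hre]
  have hsum : ∑ i, Real.sqrt (p i * q i)
      = Wf a T u / Real.sqrt (Zf a T * Zf a u) := by
    rw [Wf, Finset.sum_div]
    refine Finset.sum_congr rfl fun i _ => ?_
    rw [hp, hq]
    rw [show Real.exp (-a i / T) / Zf a T * (Real.exp (-a i / u) / Zf a u)
      = Real.exp (-a i / T) * Real.exp (-a i / u) / (Zf a T * Zf a u) by ring]
    rw [Real.sqrt_div (mul_nonneg (Real.exp_pos _).le (Real.exp_pos _).le)]
    congr 1
    rw [Real.sqrt_mul (Real.exp_pos _).le, ← Real.exp_half, ← Real.exp_half]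
    congr 2 <;> ring
  rw [hsum, div_pow, Real.sq_sqrt (by positivity)]

/-- Entropy of the Gibbs state, explicitly. -/
lemma vnEntropy_gibbs (hn : 0 < n) {T : ℝ} (hT : 0 < T) :
    vnEntropy (gibbs H T) = SS hherm.eigenvalues T := by
  set a := hherm.eigenvalues with ha
  set U := (hherm.eigenvectorUnitary : Matrix (Fin n) (Fin n) ℂ) with hUdef
  have hU1 : star U * U = 1 := by
    simpa [hUdef] using (Matrix.mem_unitaryGroup_iff').mp hherm.eigenvectorUnitary.2
  have hU2 : U * star U = 1 := by
    simpa [hUdef] using (Matrix.mem_unitaryGroup_iff).mp hherm.eigenvectorUnitary.2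
  have hZT := Zf_pos a hn T
  set p : Fin n → ℝ := fun i => Real.exp (-a i / T) / Zf a T with hp
  have hgT : gibbs H T = U * diagonal (fun i => ((p i : ℝ) : ℂ)) * star U := gibbs_eq' H hherm T
  rw [hgT, vnEntropy]
  have hAH := conj_diag_isHermitian H hherm p
  rw [dif_pos hAH]
  have := eig_sum hU1 hU2 (fun x => x * Real.log x) p hAH
  rw [show ∑ i, hAH.eigenvalues i * Real.log (hAH.eigenvalues i)
    = ∑ i, (fun x => x * Real.log x) (hAH.eigenvalues i) from rfl, this]
  -- now pure real algebra
  have hsum1 : ∑ i, p i = 1 := by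
    rw [hp]
    simp only
    rw [← Finset.sum_div, ← Zf, div_self (ne_of_gt hZT)]
  have hlog : ∀ i, Real.log (p i) = -a i / T - Real.log (Zf a T) := fun i => by
    rw [hp]
    simp only
    rw [Real.log_div (Real.exp_ne_zero _) (ne_of_gt hZT), Real.log_exp]
  have hre : ∑ i, p i * Real.log (p i)
      = ∑ i, (-(a i / T * p i) - Real.log (Zf a T) * p i) := by
    refine Finset.sum_congr rfl fun i _ => ?_
    rw [hlog i]
    ring
  rw [hre, Finset.sum_sub_distrib, ← Finset.mul_sum, hsum1, mul_one, Finset.sum_neg_distrib]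
  have hsum2 : ∑ i, a i / T * p i = Af a T / (T * Zf a T) := by
    rw [Af, Finset.sum_div]
    refine Finset.sum_congr rfl fun i _ => ?_
    rw [hp]
    simp only
    field_simp
  rw [hsum2, SS]
  ring

end main

end Stmt1Aux

open Stmt1Aux in
/-- For thermometry of a Gibbs state, the exact identity
`∂_T (T ⬝ F(T)) = ∂_T² S(T)` holds for every `T > 0`. -/
theorem stmt1 {n : ℕ} (H : Matrix (Fin n) (Fin n) ℂ) (hherm : H.IsHermitian)
    (F S : ℝ → ℝ)
    (hF : ∀ T, F T = QFI (fun T' => gibbs H T') T)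
    (hS : ∀ T, S T = vnEntropy (gibbs H T)) :
    ∀ T : ℝ, 0 < T →
      deriv (fun T' => T' * F T') T = iteratedDeriv 2 S T := by
  intro T hT
  by_cases hn : 0 < n
  · set a := hherm.eigenvalues with ha
    set G : ℝ → ℝ := fun T' =>
      (Bf a T' * Zf a T' - Af a T' ^ 2) / (T' ^ 3 * Zf a T' ^ 2) with hG
    have hFval : ∀ T' : ℝ, 0 < T' →
        F T' = (Bf a T' * Zf a T' - Af a T' ^ 2) / (T' ^ 4 * Zf a T' ^ 2) := by
      intro T' hT'
      have hZ := Zf_pos a hn T'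
      rw [hF T', QFI]
      have hpos : ∀ᶠ ε in nhds (0 : ℝ), 0 < T' + ε := by
        filter_upwards [eventually_gt_nhds (show -T' < (0:ℝ) by linarith)] with ε hε
        linarith
      have hev : (fun ε => Fid ((fun T'' => gibbs H T'') T') ((fun T'' => gibbs H T'') (T' + ε)))
          =ᶠ[nhds 0] fun ε => hfun a T' (T' + ε) := by
        filter_upwards [hpos] with ε hε
        show Fid (gibbs H T') (gibbs H (T' + ε)) = hfun a T' (T' + ε)
        rw [Fid_gibbs H hherm hn hT' hε]
        rfl
      have h1 := hev.deriv
      have h2 : deriv (fun ε => hfun a T' (T' + ε)) =ᶠ[nhds 0] fun ε => hd a T' (T' + ε) := by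
        filter_upwards [hpos] with ε hε
        have hshift : HasDerivAt (fun x : ℝ => T' + x) 1 ε := by
          simpa using (hasDerivAt_id ε).const_add T'
        have := (hasDerivAt_hfun a T' hn (ne_of_gt hε)).comp ε hshift
        rw [mul_one] at this
        exact this.deriv
      have hkey : iteratedDeriv 2
          (fun ε => Fid ((fun T'' => gibbs H T'') T') ((fun T'' => gibbs H T'') (T' + ε))) 0
          = deriv (fun ε => hd a T' (T' + ε)) 0 := by
        rw [show (2:ℕ) = 1 + 1 from rfl, iteratedDeriv_succ, iteratedDeriv_one]
        exact (h1.trans h2).deriv_eq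
      have hshift0 : HasDerivAt (fun x : ℝ => T' + x) 1 0 := by
        simpa using (hasDerivAt_id (0:ℝ)).const_add T'
      have h3 : HasDerivAt (fun ε => hd a T' (T' + ε))
          (Af a T' ^ 2 / (2 * T' ^ 4 * Zf a T' ^ 2) - Bf a T' / (2 * T' ^ 4 * Zf a T')) 0 := by
        have hbase : HasDerivAt (hd a T')
            (Af a T' ^ 2 / (2 * T' ^ 4 * Zf a T' ^ 2) - Bf a T' / (2 * T' ^ 4 * Zf a T'))
            (T' + 0) := by
          rw [add_zero]
          exact hasDerivAt_hd a T' hn hT'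
        have := hbase.comp 0 hshift0
        rwa [mul_one] at this
      rw [hkey, h3.deriv]
      field_simp
      ring
    have hSderiv : ∀ T' : ℝ, 0 < T' → deriv S T' = G T' := by
      intro T' hT'
      have hev : S =ᶠ[nhds T'] SS a := by
        filter_upwards [eventually_gt_nhds hT'] with x hx
        rw [hS x, vnEntropy_gibbs H hherm hn hx]
      rw [hev.deriv_eq, (hasDerivAt_SS a hn hT').deriv]
    have hTF : (fun T' => T' * F T') =ᶠ[nhds T] G := by
      filter_upwards [eventually_gt_nhds hT] with T' hT'
      have hZ := Zf_pos a hn T'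
      rw [hFval T' hT']
      show T' * ((Bf a T' * Zf a T' - Af a T' ^ 2) / (T' ^ 4 * Zf a T' ^ 2))
        = (Bf a T' * Zf a T' - Af a T' ^ 2) / (T' ^ 3 * Zf a T' ^ 2)
      field_simp
    have hDS : deriv S =ᶠ[nhds T] G := by
      filter_upwards [eventually_gt_nhds hT] with T' hT'
      exact hSderiv T' hT'
    rw [hTF.deriv_eq, show (2:ℕ) = 1 + 1 from rfl, iteratedDeriv_succ, iteratedDeriv_one,
      hDS.deriv_eq]
  · have hn0 : n = 0 := by omega
    subst hn0
    have hFid : ∀ ρ σ : Matrix (Fin 0) (Fin 0) ℂ, Fid ρ σ = 0 := by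
      intro ρ σ
      rw [Fid, Matrix.trace]
      simp
    have hF0 : ∀ T', F T' = 0 := by
      intro T'
      rw [hF T', QFI]
      simp only [hFid]
      rw [show (2:ℕ) = 1 + 1 from rfl, iteratedDeriv_succ, iteratedDeriv_one]
      simp
    have hS0 : S = fun _ => 0 := by
      funext T'
      rw [hS T', vnEntropy]
      split <;> simp
    rw [hS0]
    have : (fun T' => T' * F T') = fun _ => (0:ℝ) := by
      funext T'
      rw [hF0 T', mul_zero]
    rw [this, show (2:ℕ) = 1 + 1 from rfl, iteratedDeriv_succ, iteratedDeriv_one]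
    simp
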